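/- arXiv:1908.05584 — 6 statements merged into one kernel-verified Lean document; each statement's English description precedes it below -/
import Mathlib

section
/- Fix bits x, y, t, h₁, h₂, p ∈ ZMod 2. Let v = e_x ⊗ e_t ∈ ℂ² ⊗ ℂ² be the computational basis state prepared by Alice (case s = 0 of Protocol 1), and let U = (Z^p ⊗ Z^p) · (Y^{h₁} ⊗ Y^{h₂}) · CNOT^{1-y} be Bob's operation (the CNOT is applied exactly when y = 0). Then there exist bits m₁, m₂ ∈ ZMod 2 and a complex number c with ‖c‖ = 1 such that U v = c • (e_{m₁} ⊗ e_{m₂}) and m₁ + m₂ + t = x * y + h₁ + h₂. In particular, Alice's Z-basis measurement outcomes are deterministic and her output bit m₁ + m₂ + t equals x·y plus Bob's output bit h₁ + h₂. -/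
/-!
Every gate involved is monomial: it sends each computational basis state to a unit multiple
of a basis state (`Z` fixes `e_b`, `Y` sends it to `e_{b+1}`, `CNOT` sends `e_a ⊗ e_b` to
`e_a ⊗ e_{a+b}`). Hence Bob's operation sends `e_x ⊗ e_t` to a phase times
`e_{x+h₁} ⊗ e_{t+(1-y)x+h₂}`, and then
`m₁ + m₂ + t = 2(x + t) - xy + h₁ + h₂ = xy + h₁ + h₂` in `ZMod 2`.
-/

open Matrix Kronecker

noncomputable section

/-- Computational basis state of a qubit, indexed by `ZMod 2`. -/
def ket (b : ZMod 2) : ZMod 2 → ℂ := fun i => if i = b then 1 else 0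

/-- Tensor product of two single-qubit states. -/
def tens (v w : ZMod 2 → ℂ) : ZMod 2 × ZMod 2 → ℂ := fun p => v p.1 * w p.2

def Yg : Matrix (ZMod 2) (ZMod 2) ℂ := !![0, -Complex.I; Complex.I, 0]

def Zg : Matrix (ZMod 2) (ZMod 2) ℂ := !![1, 0; 0, -1]

/-- The CNOT gate (first qubit is the control): sends `e_a ⊗ e_b` to `e_a ⊗ e_{a+b}`. -/
def CNOT : Matrix (ZMod 2 × ZMod 2) (ZMod 2 × ZMod 2) ℂ :=
  Matrix.of fun i j => if i.1 = j.1 ∧ i.2 = j.1 + j.2 then 1 else 0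


theorem Matrix.kronecker_mulVec_product {R m n : Type*} [CommSemiring R] [Fintype m] [Fintype n]
    (A : Matrix m m R) (B : Matrix n n R) (v : m → R) (w : n → R) :
    (A ⊗ₖ B) *ᵥ (fun q => v q.1 * w q.2) = fun q => (A *ᵥ v) q.1 * (B *ᵥ w) q.2 := by
  funext q
  simp only [mulVec, dotProduct, kroneckerMap_apply, Fintype.sum_prod_type, Finset.sum_mul_sum]
  exact Finset.sum_congr rfl fun i _ => Finset.sum_congr rfl fun j _ => by ring

def MapsUpToPhase {ι : Type*} [Fintype ι] (A : Matrix ι ι ℂ) (v w : ι → ℂ) : Prop :=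
  ∃ c : ℂ, ‖c‖ = 1 ∧ A *ᵥ v = c • w

namespace MapsUpToPhase

variable {ι : Type*} [Fintype ι]

theorem of_mulVec_eq {A : Matrix ι ι ℂ} {v w : ι → ℂ} (h : A *ᵥ v = w) : MapsUpToPhase A v w :=
  ⟨1, norm_one, by rw [h, one_smul]⟩

theorem mul {A B : Matrix ι ι ℂ} {u v w : ι → ℂ} (hA : MapsUpToPhase A u v)
    (hB : MapsUpToPhase B v w) : MapsUpToPhase (B * A) u w := by
  obtain ⟨c, hc, hAu⟩ := hA
  obtain ⟨d, hd, hBv⟩ := hB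
  refine ⟨c * d, by rw [norm_mul, hc, hd, one_mul], ?_⟩
  rw [← mulVec_mulVec, hAu, mulVec_smul, hBv, smul_smul]

theorem pow [DecidableEq ι] {A : Matrix ι ι ℂ} {κ : Type*} {v : κ → ι → ℂ} {f : κ → κ}
    (hA : ∀ b, MapsUpToPhase A (v b) (v (f b))) (n : ℕ) (b : κ) :
    MapsUpToPhase (A ^ n) (v b) (v (f^[n] b)) := by
  induction n with
  | zero => exact of_mulVec_eq (one_mulVec _)
  | succ n ih =>
    rw [pow_succ', Function.iterate_succ_apply']
    exact ih.mul (hA _)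

theorem kronecker {A B : Matrix (ZMod 2) (ZMod 2) ℂ} {v v' w w' : ZMod 2 → ℂ}
    (hA : MapsUpToPhase A v v') (hB : MapsUpToPhase B w w') :
    MapsUpToPhase (A ⊗ₖ B) (tens v w) (tens v' w') := by
  obtain ⟨c, hc, hAv⟩ := hA
  obtain ⟨d, hd, hBw⟩ := hB
  refine ⟨c * d, by rw [norm_mul, hc, hd, one_mul], ?_⟩
  unfold tens
  rw [kronecker_mulVec_product, hAv, hBw]
  funext q
  simp only [Pi.smul_apply, smul_eq_mul]
  ring

end MapsUpToPhase

theorem ZMod.eq_zero_or_eq_one_of_two (b : ZMod 2) : b = 0 ∨ b = 1 := by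
  revert b; decide

theorem ket_eq_single (b : ZMod 2) : ket b = Pi.single b 1 := by
  funext i
  simp [ket, Pi.single_apply]

theorem Yg_mulVec_ket (b : ZMod 2) : Yg *ᵥ ket b = (Complex.I * (-1) ^ b.val) • ket (b + 1) := by
  rw [ket_eq_single, mulVec_single_one, ket_eq_single]
  funext i
  rcases b.eq_zero_or_eq_one_of_two with rfl | rfl <;>
    rcases i.eq_zero_or_eq_one_of_two with rfl | rfl <;>
    simp [Yg, ZMod.val_one, CharTwo.add_self_eq_zero] <;> rfl

theorem Zg_mulVec_ket (b : ZMod 2) : Zg *ᵥ ket b = (-1 : ℂ) ^ b.val • ket b := by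
  rw [ket_eq_single, mulVec_single_one]
  funext i
  rcases b.eq_zero_or_eq_one_of_two with rfl | rfl <;>
    rcases i.eq_zero_or_eq_one_of_two with rfl | rfl <;>
    simp [Zg, ZMod.val_one] <;> rfl

theorem CNOT_mulVec_tens_ket (a b : ZMod 2) :
    CNOT *ᵥ tens (ket a) (ket b) = tens (ket a) (ket (a + b)) := by
  funext q
  simp only [tens, ket, CNOT, mulVec, dotProduct, Fintype.sum_prod_type, of_apply, mul_ite,
    mul_one, mul_zero, Finset.sum_ite_eq', Finset.mem_univ, if_true, ite_and]
  split_ifs <;> simp_all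

theorem CNOT_pow_mulVec_tens_ket (n : ℕ) (a b : ZMod 2) :
    CNOT ^ n *ᵥ tens (ket a) (ket b) = tens (ket a) (ket (b + n * a)) := by
  induction n with
  | zero => simp
  | succ n ih =>
    rw [pow_succ', ← mulVec_mulVec, ih, CNOT_mulVec_tens_ket]
    congr 2
    push_cast
    ring

theorem Yg_pow_mapsUpToPhase (n : ℕ) (b : ZMod 2) :
    MapsUpToPhase (Yg ^ n) (ket b) (ket (b + n)) := by
  have hY (b : ZMod 2) : MapsUpToPhase Yg (ket b) (ket (b + 1)) :=
    ⟨_, by simp, Yg_mulVec_ket b⟩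
  simpa using MapsUpToPhase.pow hY n b

theorem Zg_pow_mapsUpToPhase (n : ℕ) (b : ZMod 2) : MapsUpToPhase (Zg ^ n) (ket b) (ket b) := by
  have hZ (b : ZMod 2) : MapsUpToPhase Zg (ket b) (ket (id b)) :=
    ⟨_, by simp, Zg_mulVec_ket b⟩
  simpa using MapsUpToPhase.pow hZ n b

/-- Correctness of Protocol 1 in the case `s = 0`: Alice prepares `|x⟩|t⟩`, Bob applies
`(Z^p ⊗ Z^p)(Y^{h₁} ⊗ Y^{h₂}) CNOT^{1-y}`; the result is, up to a unit phase, a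
computational basis state `e_{m₁} ⊗ e_{m₂}` with `m₁ + m₂ + t = x·y + h₁ + h₂`. -/
theorem protocol1_correct_s0 (x y t h₁ h₂ p : ZMod 2) :
    ∃ (m₁ m₂ : ZMod 2) (c : ℂ), ‖c‖ = 1 ∧
      (((Zg ^ p.val) ⊗ₖ (Zg ^ p.val)) * ((Yg ^ h₁.val) ⊗ₖ (Yg ^ h₂.val))
          * CNOT ^ (1 - y).val).mulVec (tens (ket x) (ket t))
        = c • tens (ket m₁) (ket m₂) ∧
      m₁ + m₂ + t = x * y + h₁ + h₂ := by
  set u := t + (1 - y) * x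
  have hCNOT : MapsUpToPhase (CNOT ^ (1 - y).val) (tens (ket x) (ket t)) (tens (ket x) (ket u)) :=
    .of_mulVec_eq (by rw [CNOT_pow_mulVec_tens_ket, ZMod.natCast_zmod_val])
  have hY : MapsUpToPhase ((Yg ^ h₁.val) ⊗ₖ (Yg ^ h₂.val)) (tens (ket x) (ket u))
      (tens (ket (x + h₁)) (ket (u + h₂))) := by
    simpa only [ZMod.natCast_zmod_val] using
      (Yg_pow_mapsUpToPhase h₁.val x).kronecker (Yg_pow_mapsUpToPhase h₂.val u)
  have hZ :=
    (Zg_pow_mapsUpToPhase p.val (x + h₁)).kronecker (Zg_pow_mapsUpToPhase p.val (u + h₂))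
  obtain ⟨c, hc, hU⟩ := hCNOT.mul (hY.mul hZ)
  refine ⟨x + h₁, u + h₂, c, hc, hU, ?_⟩
  linear_combination (x + t - x * y) * CharTwo.two_eq_zero (R := ZMod 2)
end
end

section
/- Fix bits i₁, i₂, i₃, i₄, y ∈ ZMod 2 and let r = i₃ + i₄. Let φ ∈ (Fin 2 × Fin 2 × Fin 2 × Fin 2 → ℂ) be the four-qubit state obtained from the computational basis state e_{i₁} ⊗ e_{i₂} ⊗ e_{i₃} ⊗ e_{i₄} by applying, in order: Hadamard gates on qubits 1 and 2; the gate CNOT₁₃ (qubit 1 controls qubit 3); the gate CNOT₂₄ (qubit 2 controls qubit 4); and, exactly when y = 0, the gate CNOT₁₂ (qubit 1 controls qubit 2). Then every computational basis index (v₁, v₂, v₃, v₄) at which φ has a nonzero amplitude satisfies (v₂ + v₃ + v₄) + r = v₁ * y. That is, in case s = 0 of Protocol 2 Alice's output bit g = v₂ + v₃ + v₄, her input bit x = v₁, and Bob's output bit r always satisfy g + r = x · y. -/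
open Matrix Kronecker

noncomputable section

/-- Four-qubit index type (bits of the four qubits). -/
abbrev Q4 : Type := ZMod 2 × ZMod 2 × ZMod 2 × ZMod 2

/-- The four-qubit computational basis state `e_{i₁} ⊗ e_{i₂} ⊗ e_{i₃} ⊗ e_{i₄}`. -/
def basis4 (i₁ i₂ i₃ i₄ : ZMod 2) : Q4 → ℂ :=
  fun v => if v = (i₁, i₂, i₃, i₄) then 1 else 0

/-- The Hadamard gate. -/
def Hg : Matrix (ZMod 2) (ZMod 2) ℂ := (Real.sqrt 2 : ℂ)⁻¹ • !![1, 1; 1, -1]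

/-- Hadamard gates on qubits 1 and 2 (identity on qubits 3 and 4). -/
def H12 : Matrix Q4 Q4 ℂ :=
  Hg ⊗ₖ (Hg ⊗ₖ ((1 : Matrix (ZMod 2) (ZMod 2) ℂ) ⊗ₖ (1 : Matrix (ZMod 2) (ZMod 2) ℂ)))

/-- CNOT with qubit 1 controlling qubit 3. -/
def CNOT13 : Matrix Q4 Q4 ℂ :=
  Matrix.of fun v w => if v = (w.1, w.2.1, w.1 + w.2.2.1, w.2.2.2) then 1 else 0

/-- CNOT with qubit 2 controlling qubit 4. -/
def CNOT24 : Matrix Q4 Q4 ℂ :=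
  Matrix.of fun v w => if v = (w.1, w.2.1, w.2.2.1, w.2.1 + w.2.2.2) then 1 else 0

/-- CNOT with qubit 1 controlling qubit 2. -/
def CNOT12 : Matrix Q4 Q4 ℂ :=
  Matrix.of fun v w => if v = (w.1, w.1 + w.2.1, w.2.2.1, w.2.2.2) then 1 else 0

/-- The state Bob prepares in Protocol 2: starting from `e_{i₁}⊗e_{i₂}⊗e_{i₃}⊗e_{i₄}`,
apply Hadamards on qubits 1, 2, then `CNOT₁₃`, `CNOT₂₄`, and `CNOT₁₂` exactly when `y = 0`. -/
def bobState (i₁ i₂ i₃ i₄ y : ZMod 2) : Q4 → ℂ :=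
  ((CNOT12 ^ (1 - y).val) * CNOT24 * CNOT13 * H12).mulVec (basis4 i₁ i₂ i₃ i₄)

/- permutation maps for the CNOT gates -/
def f13 : Q4 → Q4 := fun w => (w.1, w.2.1, w.1 + w.2.2.1, w.2.2.2)
def f24 : Q4 → Q4 := fun w => (w.1, w.2.1, w.2.2.1, w.2.1 + w.2.2.2)
def f12 : Q4 → Q4 := fun w => (w.1, w.1 + w.2.1, w.2.2.1, w.2.2.2)

lemma f13_invol : ∀ v, f13 (f13 v) = v := by decide
lemma f24_invol : ∀ v, f24 (f24 v) = v := by decide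
lemma f12_invol : ∀ v, f12 (f12 v) = v := by decide

lemma perm_mul (f : Q4 → Q4) (hf : ∀ v, f (f v) = v) (N : Matrix Q4 Q4 ℂ) (v i : Q4) :
    ((Matrix.of fun v w => if v = f w then (1 : ℂ) else 0) * N) v i = N (f v) i := by
  simp only [Matrix.mul_apply, Matrix.of_apply]
  rw [Finset.sum_eq_single (f v)]
  · rw [hf, if_pos rfl, one_mul]
  · intro b _ hb
    rw [if_neg, zero_mul]
    intro h
    exact hb (by rw [h, hf])
  · simp

lemma mul13 (N : Matrix Q4 Q4 ℂ) (v i : Q4) : (CNOT13 * N) v i = N (f13 v) i :=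
  perm_mul f13 f13_invol N v i

lemma mul24 (N : Matrix Q4 Q4 ℂ) (v i : Q4) : (CNOT24 * N) v i = N (f24 v) i :=
  perm_mul f24 f24_invol N v i

lemma mul12 (N : Matrix Q4 Q4 ℂ) (v i : Q4) : (CNOT12 * N) v i = N (f12 v) i :=
  perm_mul f12 f12_invol N v i

lemma mulVec_basis4 (M : Matrix Q4 Q4 ℂ) (i₁ i₂ i₃ i₄ : ZMod 2) (v : Q4) :
    M.mulVec (basis4 i₁ i₂ i₃ i₄) v = M v (i₁, i₂, i₃, i₄) := by
  simp only [Matrix.mulVec, dotProduct, basis4, mul_ite, mul_one, mul_zero,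
    Finset.sum_ite_eq', Finset.mem_univ, if_true]

lemma H12_ne_zero {a b c d p q r s : ZMod 2}
    (h : H12 (a, b, c, d) (p, q, r, s) ≠ 0) : c = r ∧ d = s := by
  refine ⟨?_, ?_⟩ <;> by_contra hc <;> apply h <;>
    simp [H12, Matrix.kroneckerMap_apply, Matrix.one_apply, hc]

/-- Correctness of Protocol 2 in case `s = 0`: every computational basis index
`(v₁,v₂,v₃,v₄)` with nonzero amplitude satisfies `(v₂+v₃+v₄) + r = v₁·y`, where
`r = i₃ + i₄` is Bob's output bit. -/
theorem protocol2_correct_s0 (i₁ i₂ i₃ i₄ y : ZMod 2) :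
    ∀ v : Q4, bobState i₁ i₂ i₃ i₄ y v ≠ 0 →
      (v.2.1 + v.2.2.1 + v.2.2.2) + (i₃ + i₄) = v.1 * y := by
  rintro ⟨v1, v2, v3, v4⟩ hv
  rw [bobState, mulVec_basis4] at hv
  have hy : ∀ z : ZMod 2, z = 0 ∨ z = 1 := by decide
  rcases hy y with rfl | rfl
  · have hval : ((1 : ZMod 2) - 0).val = 1 := rfl
    rw [hval, pow_one, mul_assoc, mul_assoc, mul12, mul24, mul13] at hv
    simp only [f12, f24, f13] at hv
    obtain ⟨h3, h4⟩ := H12_ne_zero hv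
    rw [← h3, ← h4]
    clear hv h3 h4
    revert v1 v2 v3 v4; decide
  · have hval : ((1 : ZMod 2) - 1).val = 0 := rfl
    rw [hval, pow_zero, one_mul, mul_assoc, mul24, mul13] at hv
    simp only [f24, f13] at hv
    obtain ⟨h3, h4⟩ := H12_ne_zero hv
    rw [← h3, ← h4]
    clear hv h3 h4
    revert v1 v2 v3 v4; decide
end
end

section
/- Fix bits i₁, i₂, i₃, i₄, y ∈ ZMod 2 and let w = i₁ + i₂ + i₃ + i₄ and r = i₃ + i₄. Let φ be the four-qubit state obtained from the computational basis state e_{i₁} ⊗ e_{i₂} ⊗ e_{i₃} ⊗ e_{i₄} by applying, in order: Hadamard gates on qubits 1 and 2; CNOT₁₃; CNOT₂₄; and, exactly when y = 0, CNOT₁₂. Let φ' = (H ⊗ H ⊗ H ⊗ H) φ. Then every computational basis index (u₁, u₂, u₃, u₄) at which φ' has a nonzero amplitude satisfies (u₁ + u₃ + u₄) + w + r = u₂ * y. That is, in case s = 1 of Protocol 2, where Alice measures all four qubits in the X basis, her input bit x = u₂, her output bit g + w = u₁ + u₃ + u₄ + w, and Bob's output bit r always satisfy (g + w) + r = x ·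 y. -/
/-!
Conjugation by `H ⊗ H` reverses a CNOT, and `H1234` cancels the two Hadamards of `H12`. Hence
`H1234 φ` is `(1 ⊗ 1 ⊗ H ⊗ H) e_{i₁i₂i₃i₄}` with its index transformed by the reversed CNOTs. That
vector vanishes unless `u₁ = i₁` and `u₂ = i₂`; pulled back through the reversed CNOTs this says
`i₁ = u₁ + (1 - y) u₂ + u₃` and `i₂ = u₂ + u₄` on the support of `H1234 φ`, and the claimed parity
identity follows modulo `2`.
-/

open Matrix Kronecker

noncomputable section

/-- Hadamard gates on all four qubits (X-basis measurement of every qubit). -/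
def H1234 : Matrix Q4 Q4 ℂ := Hg ⊗ₖ (Hg ⊗ₖ (Hg ⊗ₖ Hg))

open Function

lemma ZMod.eq_zero_or_eq_one (a : ZMod 2) : a = 0 ∨ a = 1 := by
  revert a; decide

lemma ZMod.sum_univ_two {M : Type*} [AddCommMonoid M] (f : ZMod 2 → M) : ∑ a, f a = f 0 + f 1 :=
  Fin.sum_univ_two f

lemma ZMod.neg_one_pow_val_add {R : Type*} [Ring R] (a b : ZMod 2) :
    (-1 : R) ^ (a + b).val = (-1) ^ a.val * (-1) ^ b.val := by
  rw [ZMod.val_add, ← neg_one_pow_eq_pow_mod_two, pow_add]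

theorem Matrix.of_ite_eq_mulVec {ι R : Type*} [Fintype ι] [DecidableEq ι] [NonAssocSemiring R]
    {f : ι → ι} (hf : Involutive f) (x : ι → R) :
    (of fun v w => if v = f w then (1 : R) else 0) *ᵥ x = x ∘ f := by
  ext v
  have hvf : ∀ w, v = f w ↔ f v = w := fun w => by rw [← hf.injective.eq_iff, hf w]
  simp [mulVec, dotProduct, hvf]

theorem Matrix.mulVec_comp_of_involutive {ι R : Type*} [Fintype ι] [NonUnitalNonAssocSemiring R]
    (M : Matrix ι ι R) {f : ι → ι} (hf : Involutive f) {g : ι → ι}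
    (h : ∀ u v, M u (f v) = M (g u) v) (x : ι → R) :
    M *ᵥ (x ∘ f) = (M *ᵥ x) ∘ g := by
  ext u
  rw [Function.comp_apply, mulVec, dotProduct, ← Equiv.sum_comp (hf.toPerm f)]
  simp [mulVec, dotProduct, h, hf _]

lemma Hg_apply (a b : ZMod 2) : Hg a b = (Real.sqrt 2 : ℂ)⁻¹ * (-1) ^ (a * b).val := by
  rw [show (a * b).val = a.val * b.val by revert a b; decide]
  change ((Real.sqrt 2 : ℂ)⁻¹ • !![1, 1; 1, -1] : Matrix (Fin 2) (Fin 2) ℂ) a b = _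
  fin_cases a <;> fin_cases b <;> simp [ZMod.val]

lemma Hg_mul_Hg : Hg * Hg = 1 := by
  have h : (Real.sqrt 2 : ℂ)⁻¹ * (Real.sqrt 2 : ℂ)⁻¹ = 2⁻¹ := by
    rw [← mul_inv, ← Complex.ofReal_mul, Real.mul_self_sqrt zero_le_two]
    norm_num
  ext a b
  simp only [Matrix.mul_apply, ZMod.sum_univ_two, Hg_apply]
  obtain rfl | rfl := a.eq_zero_or_eq_one <;> obtain rfl | rfl := b.eq_zero_or_eq_one <;>
    norm_num [ZMod.val_one, h]

/-- Entrywise form of `(H ⊗ H) · CNOT₁₂ = CNOT₂₁ · (H ⊗ H)`. -/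
lemma Hg_mul_Hg_add (a b c d : ZMod 2) : Hg a c * Hg b (c + d) = Hg (a + b) c * Hg b d := by
  simp only [Hg_apply, mul_add, add_mul, ZMod.neg_one_pow_val_add]
  ring

lemma H1234_mulVec_CNOT13_mulVec (x : Q4 → ℂ) :
    H1234 *ᵥ (CNOT13 *ᵥ x) = (H1234 *ᵥ x) ∘ fun u => (u.1 + u.2.2.1, u.2.1, u.2.2.1, u.2.2.2) := by
  rw [CNOT13, of_ite_eq_mulVec (by unfold Involutive; decide)]
  refine mulVec_comp_of_involutive _ (by unfold Involutive; decide) (fun u v => ?_) x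
  simp only [H1234, kroneckerMap_apply]
  linear_combination (Hg u.2.1 v.2.1 * Hg u.2.2.2 v.2.2.2) * Hg_mul_Hg_add u.1 u.2.2.1 v.1 v.2.2.1

lemma H1234_mulVec_CNOT24_mulVec (x : Q4 → ℂ) :
    H1234 *ᵥ (CNOT24 *ᵥ x) = (H1234 *ᵥ x) ∘ fun u => (u.1, u.2.1 + u.2.2.2, u.2.2.1, u.2.2.2) := by
  rw [CNOT24, of_ite_eq_mulVec (by unfold Involutive; decide)]
  refine mulVec_comp_of_involutive _ (by unfold Involutive; decide) (fun u v => ?_) x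
  simp only [H1234, kroneckerMap_apply]
  linear_combination (Hg u.1 v.1 * Hg u.2.2.1 v.2.2.1) * Hg_mul_Hg_add u.2.1 u.2.2.2 v.2.1 v.2.2.2

lemma H1234_mulVec_CNOT12_mulVec (x : Q4 → ℂ) :
    H1234 *ᵥ (CNOT12 *ᵥ x) = (H1234 *ᵥ x) ∘ fun u => (u.1 + u.2.1, u.2.1, u.2.2.1, u.2.2.2) := by
  rw [CNOT12, of_ite_eq_mulVec (by unfold Involutive; decide)]
  refine mulVec_comp_of_involutive _ (by unfold Involutive; decide) (fun u v => ?_) x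
  simp only [H1234, kroneckerMap_apply]
  linear_combination (Hg u.2.2.1 v.2.2.1 * Hg u.2.2.2 v.2.2.2) * Hg_mul_Hg_add u.1 u.2.1 v.1 v.2.1

lemma H1234_mulVec_CNOT12_pow_mulVec (n : ℕ) (x : Q4 → ℂ) :
    H1234 *ᵥ (CNOT12 ^ n *ᵥ x) =
      (H1234 *ᵥ x) ∘ fun u => (u.1 + n * u.2.1, u.2.1, u.2.2.1, u.2.2.2) := by
  induction n with
  | zero => ext u; simp
  | succ n ih =>
    ext u
    rw [pow_succ', ← mulVec_mulVec, H1234_mulVec_CNOT12_mulVec, ih]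
    simp only [Function.comp_apply, Nat.cast_succ]
    congr 2
    ring

lemma H1234_mul_H12 : H1234 * H12 = 1 ⊗ₖ (1 ⊗ₖ (Hg ⊗ₖ Hg)) := by
  simp only [H1234, H12, ← mul_kronecker_mul, Hg_mul_Hg, mul_one]

lemma H1234_mulVec_H12_mulVec_basis4_ne_zero {i₁ i₂ i₃ i₄ : ZMod 2} {v : Q4}
    (hv : (H1234 *ᵥ (H12 *ᵥ basis4 i₁ i₂ i₃ i₄)) v ≠ 0) : v.1 = i₁ ∧ v.2.1 = i₂ := by
  have hbasis : basis4 i₁ i₂ i₃ i₄ = Pi.single (i₁, i₂, i₃, i₄) 1 := by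
    ext w
    simp [basis4, Pi.single_apply]
  rw [mulVec_mulVec, H1234_mul_H12, hbasis, mulVec_single_one] at hv
  simp only [col_apply, kroneckerMap_apply, one_apply] at hv
  constructor <;> by_contra h <;> simp [h] at hv

/-- Correctness of Protocol 2 in case `s = 1` (X-basis measurement): every basis index
`(u₁,u₂,u₃,u₄)` with nonzero amplitude in `(H⊗H⊗H⊗H) φ` satisfies
`(u₁+u₃+u₄) + w + r = u₂·y`, where `w = i₁+i₂+i₃+i₄` and `r = i₃+i₄`. -/
theorem protocol2_correct_s1 (i₁ i₂ i₃ i₄ y : ZMod 2) :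
    ∀ u : Q4, (H1234.mulVec (bobState i₁ i₂ i₃ i₄ y)) u ≠ 0 →
      (u.1 + u.2.2.1 + u.2.2.2) + (i₁ + i₂ + i₃ + i₄) + (i₃ + i₄) = u.2.1 * y := by
  intro u hu
  rw [bobState, ← mulVec_mulVec, ← mulVec_mulVec, ← mulVec_mulVec,
    H1234_mulVec_CNOT12_pow_mulVec, H1234_mulVec_CNOT24_mulVec, H1234_mulVec_CNOT13_mulVec,
    ZMod.natCast_zmod_val] at hu
  obtain ⟨h₁, h₂⟩ := H1234_mulVec_H12_mulVec_basis4_ne_zero hu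
  simp only at h₁ h₂
  rw [← h₁, ← h₂]
  linear_combination (u.1 + u.2.1 - y * u.2.1 + u.2.2.1 + u.2.2.2 + i₃ + i₄) * ZMod.natCast_self 2
end
end

section
/- Let n : ℕ, let a, x, e : Fin n → ZMod 2 be Alice's inputs and one-time-table bits, let b, y, f : Fin n → ZMod 2 be Bob's inputs and one-time-table bits, and let c : ZMod 2 be a constant known to Bob. Assume e j + f j = x j * y j for all j (each one-time table is correct). Then Alice's output z_A = Σ_j (x j * (b j + y j) + e j) and Bob's output z_B = c + Σ_j ((a j + x j) * b j + f j) satisfy z_A + z_B = c + Σ_j a j * b j. That is, Protocol 6 correctly evaluates the linear polynomial (c + Σ_j a_j b_j) mod 2 with distributed output. -/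
/-- Correctness of Protocol 6: evaluating the linear polynomial
`z = c + Σ_j a_j b_j (mod 2)` with distributed output from `n` correct one-time
tables. Alice's output is `Σ_j (x_j(b_j+y_j) + e_j)` and Bob's output is
`c + Σ_j ((a_j+x_j) b_j + f_j)`; their sum is `c + Σ_j a_j b_j`. -/
theorem protocol6_linear_polynomial_correct (n : ℕ)
    (a x e : Fin n → ZMod 2) (b y f : Fin n → ZMod 2) (c : ZMod 2)
    (htable : ∀ j, e j + f j = x j * y j) :
    (∑ j, (x j * (b j + y j) + e j)) + (c + ∑ j, ((a j + x j) * b j + f j))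
      = c + ∑ j, a j * b j := by
  have h : ∀ j, (x j * (b j + y j) + e j) + ((a j + x j) * b j + f j) = a j * b j := by
    intro j
    have ht := htable j
    revert ht
    generalize x j = X; generalize y j = Y; generalize e j = E
    generalize f j = F; generalize a j = A; generalize b j = B
    revert X Y E F A B
    decide
  simp_rw [← h, Finset.sum_add_distrib]
  abel
end

section
/- Let m ≥ 1, fix a committed bit b ∈ ZMod 2, and consider the uniform probability distribution on pairs (y, f) where y ranges over the nonzero elements of (Fin m → ZMod 2) and f ranges over all of (Fin m → ZMod 2), independently. Define Alice's view e : Fin m → ZMod 2 by e j = b * y j + f j. Then for every function G : (Fin m → ZMod 2) → (Fin m → ZMod 2) (Alice's guessing strategy), the probability that G(e) = (fun j => e j + y j) is at most 1 / (2^m − 1). That is, a cheating Alice who committed b can make Bob accept the opposite bit 1 + b with probability at most 1/(2^m − 1). -/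
open Finset

/-- Security of the bit commitment Protocol 9 against a cheating Alice: having
committed `b`, with `(y, f)` uniform over pairs with `y ≠ 0`, and Alice's view
`e j = b * y j + f j`, any guessing strategy `G` produces the string `e + y`
(which would reveal the opposite bit `1 + b`) with probability at most
`1/(2^m − 1)`. -/
theorem bit_commitment_binding (m : ℕ) (hm : 1 ≤ m) (b : ZMod 2)
    (G : (Fin m → ZMod 2) → (Fin m → ZMod 2)) :
    ((Finset.univ.filter fun yf : (Fin m → ZMod 2) × (Fin m → ZMod 2) =>
          yf.1 ≠ 0 ∧ G (fun j => b * yf.1 j + yf.2 j)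
            = fun j => (b * yf.1 j + yf.2 j) + yf.1 j).card : ℝ) /
        ((Finset.univ.filter fun yf : (Fin m → ZMod 2) × (Fin m → ZMod 2) =>
          yf.1 ≠ 0).card : ℝ)
      ≤ 1 / (2 ^ m - 1) := by
  have hcard : Fintype.card (Fin m → ZMod 2) = 2 ^ m := by
    simp [Fintype.card_fun]
  -- denominator count
  have hden : (Finset.univ.filter fun yf : (Fin m → ZMod 2) × (Fin m → ZMod 2) =>
      yf.1 ≠ 0).card = (2 ^ m - 1) * 2 ^ m := by
    have : (Finset.univ.filter fun yf : (Fin m → ZMod 2) × (Fin m → ZMod 2) =>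
        yf.1 ≠ 0) = (Finset.univ.filter fun y : Fin m → ZMod 2 => y ≠ 0) ×ˢ
        (Finset.univ : Finset (Fin m → ZMod 2)) := by
      ext yf; simp [Finset.mem_product]
    rw [this, Finset.card_product, Finset.filter_ne', Finset.card_erase_of_mem (by simp)]
    simp [hcard]
  -- numerator bound via injectivity of the view map
  have hnum : (Finset.univ.filter fun yf : (Fin m → ZMod 2) × (Fin m → ZMod 2) =>
      yf.1 ≠ 0 ∧ G (fun j => b * yf.1 j + yf.2 j)
        = fun j => (b * yf.1 j + yf.2 j) + yf.1 j).card ≤ 2 ^ m := by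
    have := Finset.card_le_card_of_injOn
      (f := fun yf : (Fin m → ZMod 2) × (Fin m → ZMod 2) => fun j => b * yf.1 j + yf.2 j)
      (s := Finset.univ.filter fun yf : (Fin m → ZMod 2) × (Fin m → ZMod 2) =>
        yf.1 ≠ 0 ∧ G (fun j => b * yf.1 j + yf.2 j)
          = fun j => (b * yf.1 j + yf.2 j) + yf.1 j)
      (t := (Finset.univ : Finset (Fin m → ZMod 2)))
      (fun _ _ => Finset.mem_univ _) ?_
    · simpa [hcard] using this
    · rintro ⟨y1, f1⟩ h1 ⟨y2, f2⟩ h2 he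
      simp only [Finset.mem_coe, Finset.mem_filter] at h1 h2
      obtain ⟨-, -, hG1⟩ := h1
      obtain ⟨-, -, hG2⟩ := h2
      replace he : (fun j => b * y1 j + f1 j) = (fun j => b * y2 j + f2 j) := he
      have key : ∀ (b u1 v1 u2 v2 g : ZMod 2), g = b*u1+v1+u1 → g = b*u2+v2+u2 →
          b*u1+v1 = b*u2+v2 → u1 = u2 ∧ v1 = v2 := by decide
      have hyf : ∀ j, y1 j = y2 j ∧ f1 j = f2 j := by
        intro j
        refine key b (y1 j) (f1 j) (y2 j) (f2 j) (G (fun j => b * y1 j + f1 j) j) ?_ ?_ ?_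
        · exact congrFun hG1 j
        · rw [he]; exact congrFun hG2 j
        · exact congrFun he j
      have hy : y1 = y2 := funext fun j => (hyf j).1
      have hf : f1 = f2 := funext fun j => (hyf j).2
      simp [hy, hf]
  rw [hden]
  have h1 : (1 : ℕ) ≤ 2 ^ m := Nat.one_le_two_pow
  have hpos : (0:ℝ) < 2 ^ m - 1 := by
    have : (1:ℝ) < 2 ^ m := by
      exact_mod_cast Nat.one_lt_two_pow_iff.mpr (by omega)
    linarith
  have hcast : (((2 ^ m - 1) * 2 ^ m : ℕ) : ℝ) = ((2:ℝ) ^ m - 1) * 2 ^ m := by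
    push_cast [Nat.cast_sub h1]
    ring
  rw [hcast, div_le_div_iff₀ (by positivity) hpos, one_mul]
  calc ((Finset.univ.filter fun yf : (Fin m → ZMod 2) × (Fin m → ZMod 2) =>
      yf.1 ≠ 0 ∧ G (fun j => b * yf.1 j + yf.2 j)
        = fun j => (b * yf.1 j + yf.2 j) + yf.1 j).card : ℝ) * (2 ^ m - 1)
      ≤ (2 ^ m : ℝ) * (2 ^ m - 1) := by
        apply mul_le_mul_of_nonneg_right _ (le_of_lt hpos)
        exact_mod_cast hnum
    _ = (2 ^ m - 1) * 2 ^ m := by ring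
end

section
/- Let (Ω, μ) be a finite probability space, and let Y : Ω → S and R : Ω → T be independent random variables with S, T finite, and let M : Ω → Bool be any Boolean (one-bit) random variable. Then I(Y ; M) + I(R ; M) ≤ log 2. (This is the one-bit-communication bound underlying inequalities (1)–(3) of Proposition 1: since the message M consists of a single classical bit, the total information it can reveal about the independent bits y and r is at most one bit.) -/
open MeasureTheory

/-- Shannon entropy of a finite-valued random variable `X` on `(Ω, μ)`:
`H(X) = −Σ_s P(X = s) log P(X = s)` (natural logarithm, with `0 log 0 = 0`). -/
noncomputable def shannonEntropy {Ω : Type*} [MeasurableSpace Ω] {S : Type*} [Fintype S]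
    (μ : Measure Ω) (X : Ω → S) : ℝ :=
  -∑ s : S, (μ (X ⁻¹' {s})).toReal * Real.log (μ (X ⁻¹' {s})).toReal

/-- Mutual information `I(X ; W) = H(X) + H(W) − H(⟨X, W⟩)`. -/
noncomputable def mutualInfo {Ω : Type*} [MeasurableSpace Ω] {S T : Type*}
    [Fintype S] [Fintype T] (μ : Measure Ω) (X : Ω → S) (W : Ω → T) : ℝ :=
  shannonEntropy μ X + shannonEntropy μ W - shannonEntropy μ (fun ω => (X ω, W ω))

/-- Splitting a measure along the fibers of a finite-valued map. -/
lemma meas_inter_sum {Ω : Type*} [Fintype Ω] [MeasurableSpace Ω] [MeasurableSingletonClass Ω]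
    (μ : Measure Ω) [IsProbabilityMeasure μ] {T : Type*} [Fintype T] (A : Set Ω) (g : Ω → T) :
    (μ A).toReal = ∑ t : T, (μ (A ∩ g ⁻¹' {t})).toReal := by
  have key : μ A = ∑ t : T, μ (A ∩ g ⁻¹' {t}) := by
    have hU : A = ⋃ t ∈ (Finset.univ : Finset T), A ∩ g ⁻¹' {t} := by
      ext ω; simp
    have hd : ((Finset.univ : Finset T) : Set T).PairwiseDisjoint (fun t => A ∩ g ⁻¹' {t}) := by
      intro t _ t' _ htt'
      simp only [Function.onFun, Set.disjoint_left]
      rintro ω ⟨-, h1⟩ ⟨-, h2⟩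
      exact htt' (by simp at h1 h2; rw [← h1, ← h2])
    conv_lhs => rw [hU]
    rw [measure_biUnion_finset hd (fun t _ => (Set.toFinite _).measurableSet)]
  rw [key, ENNReal.toReal_sum (fun t _ => measure_ne_top μ _)]

lemma pair_preimage {Ω S T : Type*} (X : Ω → S) (W : Ω → T) (s : S) (t : T) :
    (fun ω => (X ω, W ω)) ⁻¹' {(s, t)} = X ⁻¹' {s} ∩ W ⁻¹' {t} := by
  ext ω; simp [Prod.ext_iff]

lemma swap3 {S T B : Type*} [Fintype S] [Fintype T] [Fintype B] (F : S → T → B → ℝ) :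
    ∑ s : S, ∑ t : T, ∑ b : B, F s t b = ∑ b : B, ∑ s : S, ∑ t : T, F s t b :=
  calc ∑ s : S, ∑ t : T, ∑ b : B, F s t b
      = ∑ s : S, ∑ b : B, ∑ t : T, F s t b :=
        Finset.sum_congr rfl (fun _ _ => Finset.sum_comm)
    _ = ∑ b : B, ∑ s : S, ∑ t : T, F s t b := Finset.sum_comm

set_option maxHeartbeats 2000000

/-- The one-bit-communication bound underlying inequalities (1)–(3) of Proposition 1:
a single classical bit `M` can reveal at most one bit (`log 2` nats) of total
information about two independent random variables `Y` and `R`. -/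
theorem mutualInfo_one_bit_bound {Ω : Type*} [Fintype Ω] [MeasurableSpace Ω]
    [MeasurableSingletonClass Ω] (μ : Measure Ω) [IsProbabilityMeasure μ]
    {S T : Type*} [Fintype S] [Fintype T]
    (Y : Ω → S) (R : Ω → T) (M : Ω → Bool)
    (hind : ∀ s t, μ (Y ⁻¹' {s} ∩ R ⁻¹' {t}) = μ (Y ⁻¹' {s}) * μ (R ⁻¹' {t})) :
    mutualInfo μ Y M + mutualInfo μ R M ≤ Real.log 2 := by
  classical
  -- probability mass functions
  set pY : S → ℝ := fun s => (μ (Y ⁻¹' {s})).toReal with hpY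
  set pR : T → ℝ := fun t => (μ (R ⁻¹' {t})).toReal with hpR
  set pM : Bool → ℝ := fun b => (μ (M ⁻¹' {b})).toReal with hpM
  set pYM : S → Bool → ℝ := fun s b => (μ (Y ⁻¹' {s} ∩ M ⁻¹' {b})).toReal with hpYM
  set pRM : T → Bool → ℝ := fun t b => (μ (R ⁻¹' {t} ∩ M ⁻¹' {b})).toReal with hpRM
  set q : S × T × Bool → ℝ :=
    fun x => (μ (Y ⁻¹' {x.1} ∩ R ⁻¹' {x.2.1} ∩ M ⁻¹' {x.2.2})).toReal with hq
  have hq0 : ∀ x, 0 ≤ q x := fun x => ENNReal.toReal_nonneg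
  have hle : ∀ (A B : Set Ω), A ⊆ B → (μ A).toReal ≤ (μ B).toReal :=
    fun A B h => ENNReal.toReal_mono (measure_ne_top μ B) (measure_mono h)
  -- marginal identities
  have hqY : ∀ s, ∑ t : T, ∑ b : Bool, q (s, t, b) = pY s := by
    intro s
    show _ = (μ (Y ⁻¹' {s})).toReal
    rw [meas_inter_sum μ (Y ⁻¹' {s}) R]
    refine Finset.sum_congr rfl fun t _ => ?_
    rw [meas_inter_sum μ (Y ⁻¹' {s} ∩ R ⁻¹' {t}) M]
  have hqR : ∀ t, ∑ s : S, ∑ b : Bool, q (s, t, b) = pR t := by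
    intro t
    show _ = (μ (R ⁻¹' {t})).toReal
    rw [meas_inter_sum μ (R ⁻¹' {t}) Y]
    refine Finset.sum_congr rfl fun s _ => ?_
    rw [meas_inter_sum μ (R ⁻¹' {t} ∩ Y ⁻¹' {s}) M]
    refine Finset.sum_congr rfl fun b _ => ?_
    exact congrArg (fun A => (μ A).toReal) (by ext ω; simp; tauto)
  have hqYM : ∀ s b, ∑ t : T, q (s, t, b) = pYM s b := by
    intro s b
    show _ = (μ (Y ⁻¹' {s} ∩ M ⁻¹' {b})).toReal
    rw [meas_inter_sum μ (Y ⁻¹' {s} ∩ M ⁻¹' {b}) R]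
    refine Finset.sum_congr rfl fun t _ => ?_
    exact congrArg (fun A => (μ A).toReal) (by ext ω; simp; tauto)
  have hqRM : ∀ t b, ∑ s : S, q (s, t, b) = pRM t b := by
    intro t b
    show _ = (μ (R ⁻¹' {t} ∩ M ⁻¹' {b})).toReal
    rw [meas_inter_sum μ (R ⁻¹' {t} ∩ M ⁻¹' {b}) Y]
    refine Finset.sum_congr rfl fun s _ => ?_
    exact congrArg (fun A => (μ A).toReal) (by ext ω; simp; tauto)
  have hqM : ∀ b, ∑ s : S, ∑ t : T, q (s, t, b) = pM b := by
    intro b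
    show _ = (μ (M ⁻¹' {b})).toReal
    rw [meas_inter_sum μ (M ⁻¹' {b}) Y]
    refine Finset.sum_congr rfl fun s _ => ?_
    rw [meas_inter_sum μ (M ⁻¹' {b} ∩ Y ⁻¹' {s}) R]
    refine Finset.sum_congr rfl fun t _ => ?_
    exact congrArg (fun A => (μ A).toReal) (by ext ω; simp; tauto)
  have hMY : ∀ b, ∑ s : S, pYM s b = pM b := by
    intro b
    rw [← hqM b]
    exact Finset.sum_congr rfl fun s _ => (hqYM s b).symm
  have hMR : ∀ b, ∑ t : T, pRM t b = pM b := by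
    intro b
    rw [← hqM b, Finset.sum_comm]
    exact Finset.sum_congr rfl fun t _ => (hqRM t b).symm
  -- total mass one
  have hsum1 : ∑ x : S × T × Bool, q x = 1 := by
    simp only [Fintype.sum_prod_type]
    rw [Finset.sum_congr rfl fun s (_ : s ∈ Finset.univ) => hqY s]
    have h1 : ((μ (Set.univ : Set Ω)).toReal) = ∑ s : S, (μ (Set.univ ∩ Y ⁻¹' {s})).toReal :=
      meas_inter_sum μ Set.univ Y
    simp only [Set.univ_inter] at h1
    rw [show ∑ s : S, pY s = ∑ s : S, (μ (Y ⁻¹' {s})).toReal from rfl, ← h1, measure_univ,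
      ENNReal.toReal_one]
  -- pointwise bounds
  have hq_pY : ∀ x, q x ≤ pY x.1 := fun x => hle _ _ (by intro ω hω; simp at hω ⊢; tauto)
  have hq_pR : ∀ x, q x ≤ pR x.2.1 := fun x => hle _ _ (by intro ω hω; simp at hω ⊢; tauto)
  have hq_pM : ∀ x, q x ≤ pM x.2.2 := fun x => hle _ _ (by intro ω hω; simp at hω ⊢; tauto)
  have hq_pYM : ∀ x, q x ≤ pYM x.1 x.2.2 :=
    fun x => hle _ _ (by intro ω hω; simp at hω ⊢; tauto)
  have hq_pRM : ∀ x, q x ≤ pRM x.2.1 x.2.2 :=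
    fun x => hle _ _ (by intro ω hω; simp at hω ⊢; tauto)
  have hq_pYpR : ∀ x, q x ≤ pY x.1 * pR x.2.1 := by
    intro x
    have h1 : μ (Y ⁻¹' {x.1} ∩ R ⁻¹' {x.2.1} ∩ M ⁻¹' {x.2.2})
        ≤ μ (Y ⁻¹' {x.1} ∩ R ⁻¹' {x.2.1}) := measure_mono (by intro ω hω; simp at hω ⊢; tauto)
    calc q x ≤ (μ (Y ⁻¹' {x.1} ∩ R ⁻¹' {x.2.1})).toReal :=
          ENNReal.toReal_mono (measure_ne_top _ _) h1
      _ = pY x.1 * pR x.2.1 := by rw [hind x.1 x.2.1, ENNReal.toReal_mul]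
  -- the integrand
  set L : S × T × Bool → ℝ := fun x =>
    Real.log (pYM x.1 x.2.2) + Real.log (pRM x.2.1 x.2.2)
      - Real.log (pY x.1) - Real.log (pR x.2.1) - 2 * Real.log (pM x.2.2) with hL
  -- rewrite the LHS as a single sum
  have eY : ∑ x : S × T × Bool, q x * Real.log (pY x.1) = ∑ s : S, pY s * Real.log (pY s) := by
    simp only [Fintype.sum_prod_type]
    refine Finset.sum_congr rfl fun s _ => ?_
    simp only [← Finset.sum_mul]
    rw [hqY s]
  have eR : ∑ x : S × T × Bool, q x * Real.log (pR x.2.1)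
      = ∑ t : T, pR t * Real.log (pR t) := by
    simp only [Fintype.sum_prod_type]
    rw [Finset.sum_comm]
    refine Finset.sum_congr rfl fun t _ => ?_
    simp only [← Finset.sum_mul]
    rw [hqR t]
  have eM : ∑ x : S × T × Bool, q x * Real.log (pM x.2.2)
      = ∑ b : Bool, pM b * Real.log (pM b) := by
    simp only [Fintype.sum_prod_type]
    rw [swap3]
    refine Finset.sum_congr rfl fun b _ => ?_
    simp only [← Finset.sum_mul]
    rw [hqM b]
  have eYM : ∑ x : S × T × Bool, q x * Real.log (pYM x.1 x.2.2)
      = ∑ p : S × Bool, pYM p.1 p.2 * Real.log (pYM p.1 p.2) := by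
    simp only [Fintype.sum_prod_type]
    refine Finset.sum_congr rfl fun s _ => ?_
    rw [Finset.sum_comm]
    refine Finset.sum_congr rfl fun b _ => ?_
    simp only [← Finset.sum_mul]
    rw [hqYM s b]
  have eRM : ∑ x : S × T × Bool, q x * Real.log (pRM x.2.1 x.2.2)
      = ∑ p : T × Bool, pRM p.1 p.2 * Real.log (pRM p.1 p.2) := by
    simp only [Fintype.sum_prod_type]
    rw [Finset.sum_comm]
    refine Finset.sum_congr rfl fun t _ => ?_
    rw [Finset.sum_comm]
    refine Finset.sum_congr rfl fun b _ => ?_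
    simp only [← Finset.sum_mul]
    rw [hqRM t b]
  have hLHS : mutualInfo μ Y M + mutualInfo μ R M = ∑ x : S × T × Bool, q x * L x := by
    have expand : ∑ x : S × T × Bool, q x * L x
        = (∑ x : S × T × Bool, q x * Real.log (pYM x.1 x.2.2))
          + (∑ x : S × T × Bool, q x * Real.log (pRM x.2.1 x.2.2))
          - (∑ x : S × T × Bool, q x * Real.log (pY x.1))
          - (∑ x : S × T × Bool, q x * Real.log (pR x.2.1))
          - 2 * (∑ x : S × T × Bool, q x * Real.log (pM x.2.2)) := by
      have pt : ∀ x : S × T × Bool, q x * L x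
          = q x * Real.log (pYM x.1 x.2.2) + q x * Real.log (pRM x.2.1 x.2.2)
            - q x * Real.log (pY x.1) - q x * Real.log (pR x.2.1)
            - 2 * (q x * Real.log (pM x.2.2)) := by
        intro x; simp only [hL]; ring
      rw [Finset.sum_congr rfl fun x _ => pt x]
      rw [Finset.sum_sub_distrib, Finset.sum_sub_distrib, Finset.sum_sub_distrib,
        Finset.sum_add_distrib, ← Finset.mul_sum]
    rw [expand, eY, eR, eM, eYM, eRM]
    simp only [mutualInfo, shannonEntropy]
    have hpre1 : ∀ p : S × Bool, (fun ω => (Y ω, M ω)) ⁻¹' {p} = Y ⁻¹' {p.1} ∩ M ⁻¹' {p.2} :=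
      fun p => pair_preimage Y M p.1 p.2
    have hpre2 : ∀ p : T × Bool, (fun ω => (R ω, M ω)) ⁻¹' {p} = R ⁻¹' {p.1} ∩ M ⁻¹' {p.2} :=
      fun p => pair_preimage R M p.1 p.2
    simp only [hpre1, hpre2, hpY, hpR, hpM, hpYM, hpRM]
    ring
  rw [hLHS]
  -- restrict to the support
  set V : Finset (S × T × Bool) := Finset.univ.filter (fun x => q x ≠ 0) with hV
  have hVsum : ∀ f : S × T × Bool → ℝ, (∀ x, q x = 0 → f x = 0) →
      ∑ x : S × T × Bool, f x = ∑ x ∈ V, f x := by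
    intro f hf
    refine (Finset.sum_subset (Finset.subset_univ V) ?_).symm
    intro x _ hx
    refine hf x ?_
    by_contra h
    exact hx (Finset.mem_filter.mpr ⟨Finset.mem_univ x, h⟩)
  have hVq : ∑ x ∈ V, q x = 1 := by
    rw [← hVsum q (fun x h => h), hsum1]
  have hVL : ∑ x : S × T × Bool, q x * L x = ∑ x ∈ V, q x * L x :=
    hVsum _ (fun x h => by rw [h, zero_mul])
  have hVpos : ∀ x ∈ V, 0 < q x := by
    intro x hx
    rw [hV, Finset.mem_filter] at hx
    exact lt_of_le_of_ne (hq0 x) (Ne.symm hx.2)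
  set g : S × T × Bool → ℝ := fun x =>
    pYM x.1 x.2.2 * pRM x.2.1 x.2.2 / (pY x.1 * pR x.2.1 * pM x.2.2 ^ 2) with hg
  have hgpos : ∀ x ∈ V, 0 < g x := by
    intro x hx
    have h0 := hVpos x hx
    exact div_pos (mul_pos (lt_of_lt_of_le h0 (hq_pYM x)) (lt_of_lt_of_le h0 (hq_pRM x)))
      (mul_pos (mul_pos (lt_of_lt_of_le h0 (hq_pY x)) (lt_of_lt_of_le h0 (hq_pR x)))
        (pow_pos (lt_of_lt_of_le h0 (hq_pM x)) 2))
  have hLg : ∀ x ∈ V, L x = Real.log (g x) := by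
    intro x hx
    have h0 := hVpos x hx
    have h1 : 0 < pYM x.1 x.2.2 := lt_of_lt_of_le h0 (hq_pYM x)
    have h2 : 0 < pRM x.2.1 x.2.2 := lt_of_lt_of_le h0 (hq_pRM x)
    have h3 : 0 < pY x.1 := lt_of_lt_of_le h0 (hq_pY x)
    have h4 : 0 < pR x.2.1 := lt_of_lt_of_le h0 (hq_pR x)
    have h5 : 0 < pM x.2.2 := lt_of_lt_of_le h0 (hq_pM x)
    rw [hg]
    rw [Real.log_div (by positivity) (by positivity), Real.log_mul h1.ne' h2.ne',
      Real.log_mul (by positivity) (by positivity), Real.log_mul h3.ne' h4.ne',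
      Real.log_pow, hL]
    push_cast
    ring
  set Z : ℝ := ∑ x ∈ V, q x * g x with hZ
  have hVne : V.Nonempty := by
    rcases Finset.eq_empty_or_nonempty V with h | h
    · rw [h, Finset.sum_empty] at hVq; norm_num at hVq
    · exact h
  have hZpos : 0 < Z :=
    Finset.sum_pos (fun x hx => mul_pos (hVpos x hx) (hgpos x hx)) hVne
  -- Z ≤ 2
  have hZle2 : Z ≤ 2 := by
    set W : Finset (S × T × Bool) := Finset.univ.filter (fun x => pM x.2.2 ≠ 0) with hW
    have step1 : Z ≤ ∑ x ∈ V, pYM x.1 x.2.2 * pRM x.2.1 x.2.2 / pM x.2.2 ^ 2 := by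
      refine Finset.sum_le_sum fun x hx => ?_
      have h0 := hVpos x hx
      have h3 : 0 < pY x.1 := lt_of_lt_of_le h0 (hq_pY x)
      have h4 : 0 < pR x.2.1 := lt_of_lt_of_le h0 (hq_pR x)
      have h5 : 0 < pM x.2.2 := lt_of_lt_of_le h0 (hq_pM x)
      have heq : q x * g x = (q x / (pY x.1 * pR x.2.1))
          * (pYM x.1 x.2.2 * pRM x.2.1 x.2.2 / pM x.2.2 ^ 2) := by
        rw [hg]; field_simp
      rw [heq]
      refine mul_le_of_le_one_left (by positivity) ?_
      rw [div_le_one (by positivity)]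
      exact hq_pYpR x
    have step2 : ∑ x ∈ V, pYM x.1 x.2.2 * pRM x.2.1 x.2.2 / pM x.2.2 ^ 2
        ≤ ∑ x ∈ W, pYM x.1 x.2.2 * pRM x.2.1 x.2.2 / pM x.2.2 ^ 2 := by
      refine Finset.sum_le_sum_of_subset_of_nonneg ?_ (fun x _ _ => by positivity)
      intro x hx
      rw [hW, Finset.mem_filter]
      exact ⟨Finset.mem_univ x, (lt_of_lt_of_le (hVpos x hx) (hq_pM x)).ne'⟩
    have step3 : ∑ x ∈ W, pYM x.1 x.2.2 * pRM x.2.1 x.2.2 / pM x.2.2 ^ 2 ≤ 2 := by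
      rw [hW, Finset.sum_filter]
      simp only [Fintype.sum_prod_type]
      rw [swap3]
      have h2 : ∀ b : Bool,
          ∑ s : S, ∑ t : T, (if pM b ≠ 0 then pYM s b * pRM t b / pM b ^ 2 else 0) ≤ 1 := by
        intro b
        by_cases hb : pM b = 0
        · simp [hb]
        · simp only [hb, ne_eq, not_false_eq_true, if_true]
          have : ∑ s : S, ∑ t : T, pYM s b * pRM t b / pM b ^ 2
              = (∑ s : S, pYM s b) * (∑ t : T, pRM t b) / pM b ^ 2 := by
            rw [Finset.sum_mul_sum, Finset.sum_div]
            refine Finset.sum_congr rfl fun s _ => ?_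
            rw [Finset.sum_div]
          have hbpos : 0 < pM b :=
            lt_of_le_of_ne ENNReal.toReal_nonneg (Ne.symm hb)
          rw [this, hMY b, hMR b, div_le_one (pow_pos hbpos 2)]
          exact le_of_eq (pow_two (pM b)).symm
      calc ∑ b : Bool, ∑ s : S, ∑ t : T,
            (if pM b ≠ 0 then pYM s b * pRM t b / pM b ^ 2 else 0)
          ≤ ∑ _b : Bool, (1 : ℝ) := Finset.sum_le_sum fun b _ => h2 b
        _ = 2 := by simp
    linarith
  -- Jensen / Gibbs step
  have key : ∀ x ∈ V, q x * L x ≤ q x * (g x / Z - 1 + Real.log Z) := by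
    intro x hx
    have hgp := hgpos x hx
    have h1 : Real.log (g x / Z) ≤ g x / Z - 1 :=
      Real.log_le_sub_one_of_pos (div_pos hgp hZpos)
    rw [Real.log_div hgp.ne' hZpos.ne'] at h1
    rw [hLg x hx]
    exact mul_le_mul_of_nonneg_left (by linarith) (hVpos x hx).le
  have main : ∑ x ∈ V, q x * L x ≤ Real.log Z := by
    calc ∑ x ∈ V, q x * L x ≤ ∑ x ∈ V, q x * (g x / Z - 1 + Real.log Z) :=
          Finset.sum_le_sum key
      _ = (∑ x ∈ V, q x * g x) / Z - (∑ x ∈ V, q x) + (∑ x ∈ V, q x) * Real.log Z := by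
          have expand2 : ∀ x, q x * (g x / Z - 1 + Real.log Z)
              = q x * g x / Z - q x + q x * Real.log Z := fun x => by ring
          simp only [expand2]
          rw [Finset.sum_add_distrib, Finset.sum_sub_distrib, ← Finset.sum_div,
            ← Finset.sum_mul]
      _ = Real.log Z := by
          rw [← hZ, hVq, div_self hZpos.ne']; ring
  rw [hVL]
  calc ∑ x ∈ V, q x * L x ≤ Real.log Z := main
    _ ≤ Real.log 2 := Real.log_le_log hZpos hZle2
end
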